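/- In the nil-Hecke algebra, for each composition (r_1,...,r_m) of r, the element E = E_1⋯E_m where E_j = (∂_{j,1} x_{j,1})(∂_{j,2} x_{j,2} ∂_{j,1} x_{j,1})⋯(∂_{j,r_j-1} x_{j,r_j-1} ⋯ ∂_{j,1} x_{j,1}) (with ∂_{j,i}, x_{j,i} the operators ∂_{r_1+⋯+r_{j-1}+i}, x_{r_1+⋯+r_{j-1}+i} acting on ℤ[x_1,...,x_r]) is an idempotent whose image is the ring of invariants ℤ[x_1,...,x_r]^{S_{r_1}×⋯×S_{r_m}}. -/

import Mathlib

/-!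
Write `π_{ij} = ∂_{ij} ∘ x_i`. Each `π_i` maps into the `s_i`-invariants and fixes them. The
factor `E_j` is a product of `π`'s along a reduced word for the longest element of its block; by
the commutation and braid relations of the `π_i` (checked after clearing the denominators
`x_i - x_j`) it can be rewritten with any `π_i` of the block as its outermost factor, so its image
is symmetric in the block's variables, while it fixes every such symmetric polynomial. Each factor
commutes with the transpositions of the other blocks, which gives both claims for adjacent
transpositions; these generate the whole Young subgroup.
-/

open MvPolynomial

/-- The Demazure (divided difference) operator on `ℤ`-polynomials associated to the pair of
variables `i`, `j`: the unique `g` with `(X i - X j) * g = f - s f`, where `s` swaps `i` and `j`. -/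
noncomputable def demazure {σ : Type} [DecidableEq σ] (i j : σ)
    (f : MvPolynomial σ ℤ) : MvPolynomial σ ℤ := by
  classical
  exact if h : ∃ g, (X i - X j) * g = f - rename (Equiv.swap i j) f then h.choose else 0

/-- The operator `∂_t ∘ (x_t ·)` (0-indexed: `∂_t` swaps the variables `t` and `t+1`). -/
noncomputable def DX (t : ℕ) : MvPolynomial ℕ ℤ → MvPolynomial ℕ ℤ :=
  fun f => demazure t (t + 1) (X t * f)

/-- `Cblock t0 t = (∂_{t0+t-1} x_{t0+t-1}) ∘ ⋯ ∘ (∂_{t0} x_{t0})` (0-indexed). -/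
noncomputable def Cblock (t0 : ℕ) : ℕ → (MvPolynomial ℕ ℤ → MvPolynomial ℕ ℤ)
  | 0 => id
  | (s + 1) => DX (t0 + s) ∘ Cblock t0 s

noncomputable def EjAux (t0 : ℕ) : ℕ → (MvPolynomial ℕ ℤ → MvPolynomial ℕ ℤ)
  | 0 => id
  | (s + 1) => EjAux t0 s ∘ Cblock t0 (s + 1)

/-- The factor `E_j = (∂_{j,1}x_{j,1})(∂_{j,2}x_{j,2}∂_{j,1}x_{j,1})⋯
(∂_{j,r_j-1}x_{j,r_j-1}⋯∂_{j,1}x_{j,1})` for a block of size `rj` starting at index `t0`. -/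
noncomputable def Ej (t0 rj : ℕ) : MvPolynomial ℕ ℤ → MvPolynomial ℕ ℤ :=
  EjAux t0 (rj - 1)

/-- `off m rs j = r_1 + ⋯ + r_{j-1}`, the starting index of the `j`-th block. -/
def off (m : ℕ) (rs : Fin m → ℕ) (j : Fin m) : ℕ :=
  ∑ j' ∈ Finset.univ.filter (· < j), rs j'

/-- The nil-Hecke idempotent `E = E_1 E_2 ⋯ E_m` associated to the composition `(r_1,…,r_m)`. -/
noncomputable def Efull (m : ℕ) (rs : Fin m → ℕ) : MvPolynomial ℕ ℤ → MvPolynomial ℕ ℤ :=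
  (List.ofFn fun j : Fin m => Ej (off m rs j) (rs j)).foldr (· ∘ ·) id

lemma X_sub_X_ne_zero {σ R : Type*} [CommRing R] [Nontrivial R] {i j : σ} (h : i ≠ j) :
    (X i - X j : MvPolynomial σ R) ≠ 0 :=
  sub_ne_zero.mpr fun he => h (X_injective he)

section Isobaric

variable {σ : Type} [DecidableEq σ]

lemma rename_swap_rename_swap {R : Type*} [CommSemiring R] (i j : σ) (f : MvPolynomial σ R) :
    rename (Equiv.swap i j) (rename (Equiv.swap i j) f) = f := by
  rw [rename_rename, ← Equiv.coe_trans, Equiv.swap_swap, Equiv.coe_refl, rename_id_apply]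

lemma X_sub_X_dvd_sub_rename_swap {R : Type*} [CommRing R] (i j : σ) (f : MvPolynomial σ R) :
    X i - X j ∣ f - rename (Equiv.swap i j) f := by
  let I := Ideal.span {(X i - X j : MvPolynomial σ R)}
  have hij : Ideal.Quotient.mk I (X i) = Ideal.Quotient.mk I (X j) :=
    Ideal.Quotient.eq.2 (Ideal.subset_span rfl)
  have hswap : (Ideal.Quotient.mk I).comp (rename (Equiv.swap i j)).toRingHom =
      Ideal.Quotient.mk I := by
    refine MvPolynomial.ringHom_ext (fun _ => by simp) fun k => ?_
    rcases eq_or_ne k i with rfl | hki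
    · simp [hij]
    rcases eq_or_ne k j with rfl | hkj
    · simp [hij]
    simp [Equiv.swap_apply_of_ne_of_ne hki hkj]
  rw [← Ideal.mem_span_singleton, ← Ideal.Quotient.eq]
  exact (RingHom.congr_fun hswap f).symm

lemma mul_demazure (i j : σ) (f : MvPolynomial σ ℤ) :
    (X i - X j) * demazure i j f = f - rename (Equiv.swap i j) f := by
  have hex : ∃ g, (X i - X j) * g = f - rename (Equiv.swap i j) f :=
    (X_sub_X_dvd_sub_rename_swap i j f).imp fun _ hg => hg.symm
  rw [demazure, dif_pos hex]
  exact hex.choose_spec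

/-- The isobaric divided difference `π_{ij} = ∂_{ij} ∘ (x_i ·)`; `DX t` is `isobaric t (t + 1)`. -/
noncomputable def isobaric (i j : σ) (f : MvPolynomial σ ℤ) : MvPolynomial σ ℤ :=
  demazure i j (X i * f)

lemma mul_isobaric (i j : σ) (f : MvPolynomial σ ℤ) :
    (X i - X j) * isobaric i j f = X i * f - X j * rename (Equiv.swap i j) f := by
  rw [isobaric, mul_demazure, map_mul, rename_X, Equiv.swap_apply_left]

lemma rename_isobaric (w : Equiv.Perm σ) {i j : σ} (h : i ≠ j) (f : MvPolynomial σ ℤ) :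
    rename w (isobaric i j f) = isobaric (w i) (w j) (rename w f) := by
  have hwij : w i ≠ w j := w.injective.ne h
  refine mul_left_cancel₀ (X_sub_X_ne_zero hwij) ?_
  have hw := congrArg (rename w) (mul_isobaric i j f)
  rw [map_mul, map_sub, map_sub, map_mul, map_mul, rename_X, rename_X, rename_rename] at hw
  rw [hw, mul_isobaric, rename_rename, Equiv.swap_apply_apply]
  congr 3
  ext x
  simp

lemma rename_swap_isobaric {i j : σ} (h : i ≠ j) (f : MvPolynomial σ ℤ) :
    rename (Equiv.swap i j) (isobaric i j f) = isobaric i j f := by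
  rw [rename_isobaric _ h, Equiv.swap_apply_left, Equiv.swap_apply_right]
  refine mul_left_cancel₀ (X_sub_X_ne_zero h.symm) ?_
  have hji := mul_isobaric j i (rename (Equiv.swap i j) f)
  rw [Equiv.swap_comm j i, rename_swap_rename_swap] at hji
  linear_combination hji + mul_isobaric i j f

lemma isobaric_of_rename_swap_eq {i j : σ} (h : i ≠ j) {f : MvPolynomial σ ℤ}
    (hf : rename (Equiv.swap i j) f = f) : isobaric i j f = f :=
  mul_left_cancel₀ (X_sub_X_ne_zero h) (by rw [mul_isobaric, hf]; ring)

lemma mul_mul_isobaric_isobaric {i j k l : σ} (hik : i ≠ k) (hil : i ≠ l)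
    (hjk : j ≠ k) (hjl : j ≠ l) (hkl : k ≠ l) (f : MvPolynomial σ ℤ) :
    (X i - X j) * (X k - X l) * isobaric i j (isobaric k l f) =
      X i * X k * f - X i * X l * rename (Equiv.swap k l) f
        - X j * X k * rename (Equiv.swap i j) f
        + X j * X l * rename (Equiv.swap k l) (rename (Equiv.swap i j) f) := by
  have hswap : rename (Equiv.swap i j) (isobaric k l f) =
      isobaric k l (rename (Equiv.swap i j) f) := by
    rw [rename_isobaric _ hkl, Equiv.swap_apply_of_ne_of_ne hik.symm hjk.symm,
      Equiv.swap_apply_of_ne_of_ne hil.symm hjl.symm]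
  linear_combination (X k - X l) * mul_isobaric i j (isobaric k l f)
    + X i * mul_isobaric k l f - X j * mul_isobaric k l (rename (Equiv.swap i j) f)
    - X j * (X k - X l) * hswap

lemma isobaric_comm {i j k l : σ} (hij : i ≠ j) (hik : i ≠ k) (hil : i ≠ l)
    (hjk : j ≠ k) (hjl : j ≠ l) (hkl : k ≠ l) (f : MvPolynomial σ ℤ) :
    isobaric i j (isobaric k l f) = isobaric k l (isobaric i j f) := by
  refine mul_left_cancel₀ (mul_ne_zero (X_sub_X_ne_zero hij) (X_sub_X_ne_zero hkl)) ?_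
  rw [mul_mul_isobaric_isobaric hik hil hjk hjl hkl, mul_comm (X i - X j),
    mul_mul_isobaric_isobaric hik.symm hjk.symm hil.symm hjl.symm hij, rename_rename,
    rename_rename, ← Equiv.Perm.coe_mul, ← Equiv.Perm.coe_mul,
    (Equiv.Perm.disjoint_swap_swap (by aesop)).commute.eq]
  ring

section Braid

variable {a b c : σ} (hab : a ≠ b) (hac : a ≠ c) (hbc : b ≠ c)
include hab hac hbc

/- Both braid words, multiplied by the Vandermonde product, give the antisymmetrization
`∑_w sgn(w) w(x_a² x_b f)` over the permutations `w` of `a, b, c`. -/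
lemma mul_isobaric_braid_left (f : MvPolynomial σ ℤ) :
    (X a - X b) * (X a - X c) * (X b - X c) * isobaric a b (isobaric b c (isobaric a b f)) =
      X a ^ 2 * X b * f - X a * X b ^ 2 * rename (Equiv.swap a b) f
        - X a ^ 2 * X c * rename (Equiv.swap b c) f - X b * X c ^ 2 * rename (Equiv.swap a c) f
        + X a * X c ^ 2 * rename (Equiv.swap a c) (rename (Equiv.swap b c) f)
        + X b ^ 2 * X c * rename (Equiv.swap b c) (rename (Equiv.swap a c) f) := by
  set u := isobaric a b f
  have hu_bc : rename (Equiv.swap b c) u = isobaric a c (rename (Equiv.swap b c) f) := by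
    rw [rename_isobaric _ hab, Equiv.swap_apply_of_ne_of_ne hab hac, Equiv.swap_apply_left]
  have hu_ac : rename (Equiv.swap a c) u = isobaric c b (rename (Equiv.swap a c) f) := by
    rw [rename_isobaric _ hab, Equiv.swap_apply_left, Equiv.swap_apply_of_ne_of_ne hab.symm hbc]
  have hv_ab : rename (Equiv.swap a b) (isobaric b c u) = isobaric a c u := by
    rw [rename_isobaric _ hbc, Equiv.swap_apply_right,
      Equiv.swap_apply_of_ne_of_ne hac.symm hbc.symm, rename_swap_isobaric hab]
  have hcb := mul_isobaric c b (rename (Equiv.swap a c) f)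
  rw [Equiv.swap_comm c b] at hcb
  linear_combination (X b - X c) * (X a - X c) * mul_isobaric a b (isobaric b c u)
    + X a * (X a - X c) * mul_isobaric b c u - X b * (X b - X c) * mul_isobaric a c u
    + X a * X b * mul_isobaric a b f
    - X a * X c * mul_isobaric a c (rename (Equiv.swap b c) f) - X b * X c * hcb
    - (X a - X c) * X b * (X b - X c) * hv_ab
    - X a * (X a - X c) * X c * hu_bc + X b * (X b - X c) * X c * hu_ac

lemma mul_isobaric_braid_right (f : MvPolynomial σ ℤ) :
    (X a - X b) * (X a - X c) * (X b - X c) * isobaric b c (isobaric a b (isobaric b c f)) =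
      X a ^ 2 * X b * f - X a * X b ^ 2 * rename (Equiv.swap a b) f
        - X a ^ 2 * X c * rename (Equiv.swap b c) f - X b * X c ^ 2 * rename (Equiv.swap a c) f
        + X a * X c ^ 2 * rename (Equiv.swap a b) (rename (Equiv.swap a c) f)
        + X b ^ 2 * X c * rename (Equiv.swap a c) (rename (Equiv.swap a b) f) := by
  set u := isobaric b c f
  have hu_ab : rename (Equiv.swap a b) u = isobaric a c (rename (Equiv.swap a b) f) := by
    rw [rename_isobaric _ hbc, Equiv.swap_apply_right,
      Equiv.swap_apply_of_ne_of_ne hac.symm hbc.symm]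
  have hu_ac : rename (Equiv.swap a c) u = isobaric b a (rename (Equiv.swap a c) f) := by
    rw [rename_isobaric _ hbc, Equiv.swap_apply_of_ne_of_ne hab.symm hbc, Equiv.swap_apply_right]
  have hv_bc : rename (Equiv.swap b c) (isobaric a b u) = isobaric a c u := by
    rw [rename_isobaric _ hab, Equiv.swap_apply_left, Equiv.swap_apply_of_ne_of_ne hab hac,
      rename_swap_isobaric hbc]
  have hba := mul_isobaric b a (rename (Equiv.swap a c) f)
  rw [Equiv.swap_comm b a] at hba
  linear_combination (X a - X b) * (X a - X c) * mul_isobaric b c (isobaric a b u)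
    + X b * (X a - X c) * mul_isobaric a b u - X c * (X a - X b) * mul_isobaric a c u
    + X a ^ 2 * mul_isobaric b c f
    - X b ^ 2 * mul_isobaric a c (rename (Equiv.swap a b) f) - X c ^ 2 * hba
    - (X a - X b) * (X a - X c) * X c * hv_bc
    - X b ^ 2 * (X a - X c) * hu_ab + X c ^ 2 * (X a - X b) * hu_ac

lemma isobaric_braid (f : MvPolynomial σ ℤ) :
    isobaric a b (isobaric b c (isobaric a b f)) =
      isobaric b c (isobaric a b (isobaric b c f)) := by
  have hrename : ∀ p q r s : Equiv.Perm σ, p * q = r * s →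
      rename p (rename q f) = rename r (rename s f) := by
    intro p q r s h
    rw [rename_rename, rename_rename, ← Equiv.Perm.coe_mul, h, Equiv.Perm.coe_mul]
  have h₁ : Equiv.swap a c * Equiv.swap b c = Equiv.swap a b * Equiv.swap a c := by
    ext x
    simp only [Equiv.Perm.coe_mul, Function.comp_apply, Equiv.swap_apply_def]
    split_ifs <;> simp_all
  have h₂ : Equiv.swap b c * Equiv.swap a c = Equiv.swap a c * Equiv.swap a b := by
    ext x
    simp only [Equiv.Perm.coe_mul, Function.comp_apply, Equiv.swap_apply_def]
    split_ifs <;> simp_all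
  refine mul_left_cancel₀ (mul_ne_zero (mul_ne_zero (X_sub_X_ne_zero hab) (X_sub_X_ne_zero hac))
    (X_sub_X_ne_zero hbc)) ?_
  rw [mul_isobaric_braid_left hab hac hbc, mul_isobaric_braid_right hab hac hbc,
    hrename _ _ _ _ h₁, hrename _ _ _ _ h₂]

end Braid

end Isobaric

def IsSymmetricIn (a b : ℕ) (f : MvPolynomial ℕ ℤ) : Prop :=
  ∀ i, a ≤ i → i + 1 < b → rename (Equiv.swap i (i + 1)) f = f

lemma IsSymmetricIn.mono {a b a' b' : ℕ} {f : MvPolynomial ℕ ℤ} (hf : IsSymmetricIn a b f)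
    (ha : a ≤ a') (hb : b' ≤ b) : IsSymmetricIn a' b' f :=
  fun i hi hib => hf i (ha.trans hi) (hib.trans_le hb)

section DX

lemma rename_swap_DX (t : ℕ) (f : MvPolynomial ℕ ℤ) :
    rename (Equiv.swap t (t + 1)) (DX t f) = DX t f :=
  rename_swap_isobaric (by omega) f

lemma DX_of_rename_swap_eq {t : ℕ} {f : MvPolynomial ℕ ℤ}
    (hf : rename (Equiv.swap t (t + 1)) f = f) : DX t f = f :=
  isobaric_of_rename_swap_eq (by omega) hf

lemma commute_rename_DX {w : Equiv.Perm ℕ} {t : ℕ} (ht : w t = t) (ht' : w (t + 1) = t + 1) :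
    Function.Commute (rename w) (DX t) := fun f => by
  rw [DX, ← isobaric, rename_isobaric w (by omega), ht, ht']
  rfl

lemma commute_DX {t u : ℕ} (h : t + 2 ≤ u) : Function.Commute (DX t) (DX u) :=
  fun _ => isobaric_comm (by omega) (by omega) (by omega) (by omega) (by omega) (by omega) _

lemma DX_braid (t : ℕ) (f : MvPolynomial ℕ ℤ) :
    DX t (DX (t + 1) (DX t f)) = DX (t + 1) (DX t (DX (t + 1) f)) :=
  isobaric_braid (c := t + 1 + 1) (by omega) (by omega) (by omega) f

end DX

section Blocks

lemma commute_DX_Cblock {t₀ s u : ℕ} (h : t₀ + s + 1 ≤ u) :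
    Function.Commute (DX u) (Cblock t₀ s) := by
  induction s with
  | zero => exact Function.Commute.id_right
  | succ s ih => exact (commute_DX (by omega)).symm.comp_right (ih (by omega))

/-- `Cblock t₀ s ∘ DX (j + 1) = DX j ∘ Cblock t₀ s`: the braid relation moves `DX` through a
column, one index down. -/
lemma semiconj_Cblock_DX {t₀ s j : ℕ} (hj : t₀ ≤ j) (hjs : j + 2 ≤ t₀ + s) :
    Function.Semiconj (Cblock t₀ s) (DX (j + 1)) (DX j) := by
  induction s with
  | zero => omega
  | succ s ih =>
    rcases Nat.lt_or_ge (j + 2) (t₀ + s + 1) with hlt | hge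
    · exact Function.Semiconj.comp_left (commute_DX (by omega)).symm (ih (by omega))
    obtain ⟨s, rfl⟩ : ∃ s', s = s' + 1 := ⟨s - 1, by omega⟩
    obtain rfl : j = t₀ + s := by omega
    intro f
    calc DX (t₀ + s + 1) (DX (t₀ + s) (Cblock t₀ s (DX (t₀ + s + 1) f)))
        = DX (t₀ + s + 1) (DX (t₀ + s) (DX (t₀ + s + 1) (Cblock t₀ s f))) := by
          rw [commute_DX_Cblock (le_refl _)]
      _ = DX (t₀ + s) (DX (t₀ + s + 1) (DX (t₀ + s) (Cblock t₀ s f))) := (DX_braid _ _).symm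

lemma semiconj_Cblock_Cblock {t₀ S a s : ℕ} (ha : t₀ ≤ a) (has : a + s + 1 ≤ t₀ + S) :
    Function.Semiconj (Cblock t₀ S) (Cblock (a + 1) s) (Cblock a s) := by
  induction s with
  | zero => exact Function.Semiconj.id_right
  | succ s ih =>
    have hDX : Function.Semiconj (Cblock t₀ S) (DX (a + 1 + s)) (DX (a + s)) := by
      rw [Nat.add_right_comm]
      exact semiconj_Cblock_DX (by omega) (by omega)
    exact hDX.comp_right (ih (by omega))

lemma semiconj_Cblock_EjAux {t₀ S a s : ℕ} (ha : t₀ ≤ a) (has : a + s + 1 ≤ t₀ + S) :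
    Function.Semiconj (Cblock t₀ S) (EjAux (a + 1) s) (EjAux a s) := by
  induction s with
  | zero => exact Function.Semiconj.id_right
  | succ s ih => exact (ih (by omega)).comp_right (semiconj_Cblock_Cblock ha (by omega))

lemma EjAux_succ_apply (t₀ s : ℕ) (f : MvPolynomial ℕ ℤ) :
    EjAux t₀ (s + 1) f = Cblock t₀ (s + 1) (EjAux (t₀ + 1) s f) :=
  (semiconj_Cblock_EjAux le_rfl (by omega) f).symm

lemma isSymmetricIn_EjAux (t₀ s : ℕ) (f : MvPolynomial ℕ ℤ) :
    IsSymmetricIn t₀ (t₀ + s + 1) (EjAux t₀ s f) := by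
  induction s generalizing f with
  | zero => intro i hi hi'; omega
  | succ s ih =>
    intro i hi hi'
    rcases Nat.lt_or_ge (i + 1) (t₀ + s + 1) with hlt | hge
    · exact ih _ i hi hlt
    obtain rfl : i = t₀ + s := by omega
    rw [EjAux_succ_apply]
    exact rename_swap_DX _ _

lemma isSymmetricIn_Ej (t₀ n : ℕ) (f : MvPolynomial ℕ ℤ) :
    IsSymmetricIn t₀ (t₀ + n) (Ej t₀ n f) :=
  (isSymmetricIn_EjAux t₀ (n - 1) f).mono le_rfl (by omega)

lemma commute_rename_Cblock {w : Equiv.Perm ℕ} {t₀ s : ℕ}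
    (hw : ∀ k, t₀ ≤ k → k ≤ t₀ + s → w k = k) :
    Function.Commute (rename w) (Cblock t₀ s) := by
  induction s with
  | zero => exact Function.Commute.id_right
  | succ s ih =>
    exact (commute_rename_DX (hw _ (by omega) (by omega)) (hw _ (by omega) (by omega))).comp_right
      (ih fun k hk hks => hw k hk (by omega))

lemma commute_rename_EjAux {w : Equiv.Perm ℕ} {t₀ s : ℕ}
    (hw : ∀ k, t₀ ≤ k → k ≤ t₀ + s → w k = k) :
    Function.Commute (rename w) (EjAux t₀ s) := by
  induction s with
  | zero => exact Function.Commute.id_right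
  | succ s ih => exact (ih fun k hk hks => hw k hk (by omega)).comp_right (commute_rename_Cblock hw)

lemma commute_rename_Ej {w : Equiv.Perm ℕ} {t₀ n : ℕ} (hw : ∀ k, t₀ ≤ k → k < t₀ + n → w k = k) :
    Function.Commute (rename w) (Ej t₀ n) := by
  cases n with
  | zero => exact Function.Commute.id_right
  | succ n => exact commute_rename_EjAux fun k hk hkn => hw k hk (by omega)

lemma Cblock_of_isSymmetricIn {t₀ s : ℕ} {f : MvPolynomial ℕ ℤ}
    (hf : IsSymmetricIn t₀ (t₀ + s + 1) f) : Cblock t₀ s f = f := by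
  induction s with
  | zero => rfl
  | succ s ih =>
    change DX (t₀ + s) (Cblock t₀ s f) = f
    rw [ih (hf.mono le_rfl (by omega)), DX_of_rename_swap_eq (hf _ (by omega) (by omega))]

lemma EjAux_of_isSymmetricIn {t₀ s : ℕ} {f : MvPolynomial ℕ ℤ}
    (hf : IsSymmetricIn t₀ (t₀ + s + 1) f) : EjAux t₀ s f = f := by
  induction s with
  | zero => rfl
  | succ s ih =>
    change EjAux t₀ s (Cblock t₀ (s + 1) f) = f
    rw [Cblock_of_isSymmetricIn hf, ih (hf.mono le_rfl (by omega))]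

lemma Ej_of_isSymmetricIn {t₀ n : ℕ} {f : MvPolynomial ℕ ℤ} (hf : IsSymmetricIn t₀ (t₀ + n) f) :
    Ej t₀ n f = f := by
  cases n with
  | zero => rfl
  | succ n => exact EjAux_of_isSymmetricIn hf

end Blocks

def partSum (m : ℕ) (rs : Fin m → ℕ) (n : ℕ) : ℕ :=
  ∑ k ∈ Finset.univ.filter (fun k : Fin m => (k : ℕ) < n), rs k

section Offsets

variable {m : ℕ} (rs : Fin m → ℕ)

lemma partSum_succ (j : Fin m) : partSum m rs (j + 1) = off m rs j + rs j := by
  have : Finset.univ.filter (fun k : Fin m => (k : ℕ) < j + 1) =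
      insert j (Finset.univ.filter fun k : Fin m => (k : ℕ) < j) := by
    ext k
    simp only [Finset.mem_filter, Finset.mem_univ, true_and, Finset.mem_insert, Fin.ext_iff]
    omega
  rw [partSum, this, Finset.sum_insert (by simp), add_comm]
  rfl

lemma partSum_mono : Monotone (partSum m rs) := fun a b hab =>
  Finset.sum_le_sum_of_subset fun k hk => by
    simp only [Finset.mem_filter, Finset.mem_univ, true_and] at hk ⊢
    omega

lemma partSum_self : partSum m rs m = ∑ k, rs k := by
  simp [partSum]

lemma off_add_le_off {j j' : Fin m} (h : j < j') : off m rs j + rs j ≤ off m rs j' := by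
  rw [← partSum_succ]
  exact partSum_mono rs (Nat.succ_le_of_lt h)

lemma off_add_le_sum (j : Fin m) : off m rs j + rs j ≤ ∑ k, rs k := by
  rw [← partSum_succ, ← partSum_self]
  exact partSum_mono rs j.isLt

lemma eq_of_mem_block {i : ℕ} {j j' : Fin m} (hj : off m rs j ≤ i) (hj' : i < off m rs j + rs j)
    (hk : off m rs j' ≤ i) (hk' : i < off m rs j' + rs j') : j = j' := by
  rcases lt_trichotomy j j' with h | h | h
  · have := off_add_le_off rs h; omega
  · exact h
  · have := off_add_le_off rs h; omega

lemma exists_block {i : ℕ} (hi : i < ∑ k, rs k) :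
    ∃ j : Fin m, off m rs j ≤ i ∧ i < off m rs j + rs j := by
  classical
  have hex : ∃ n, i < partSum m rs n := ⟨m, (partSum_self rs).symm ▸ hi⟩
  set n := Nat.find hex with hn
  have hnm : n ≤ m := Nat.find_min' hex ((partSum_self rs).symm ▸ hi)
  have hn0 : n ≠ 0 := by
    intro h
    have := Nat.find_spec hex
    rw [← hn, h, partSum, Finset.filter_false_of_mem (by simp), Finset.sum_empty] at this
    omega
  refine ⟨⟨n - 1, by omega⟩, ?_, ?_⟩
  · exact not_lt.1 (Nat.find_min hex (m := n - 1) (by omega))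
  · rw [← partSum_succ, Nat.sub_add_cancel (Nat.one_le_iff_ne_zero.2 hn0)]
    exact Nat.find_spec hex

end Offsets

lemma isFixedPt_foldr_comp {α : Type*} {x : α} {L : List (α → α)}
    (h : ∀ F ∈ L, Function.IsFixedPt F x) : Function.IsFixedPt (L.foldr (· ∘ ·) id) x := by
  induction L with
  | nil => rfl
  | cons F L ih =>
    exact (h F List.mem_cons_self).comp (ih fun G hG => h G (List.mem_cons_of_mem F hG))

lemma comp_foldr_comp_eq {α : Type*} (R : α → α) {L : List (α → α)}
    (hL : ∀ F ∈ L, Function.Commute R F ∨ R ∘ F = F) (hR : ∃ F ∈ L, R ∘ F = F) :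
    R ∘ L.foldr (· ∘ ·) id = L.foldr (· ∘ ·) id := by
  induction L with
  | nil => simp at hR
  | cons F L ih =>
    change R ∘ F ∘ L.foldr (· ∘ ·) id = F ∘ L.foldr (· ∘ ·) id
    by_cases hF : R ∘ F = F
    · rw [← Function.comp_assoc, hF]
    obtain ⟨G, hG, hRG⟩ := hR
    have hGL : G ∈ L := (List.mem_cons.1 hG).resolve_left fun h => hF (h ▸ hRG)
    rw [← Function.comp_assoc, ((hL F List.mem_cons_self).resolve_right hF).comp_eq,
      Function.comp_assoc, ih (fun G hG => hL G (List.mem_cons_of_mem F hG)) ⟨G, hGL, hRG⟩]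

section Efull

variable {m : ℕ} {rs : Fin m → ℕ}

lemma Efull_of_isSymmetricIn {f : MvPolynomial ℕ ℤ}
    (hf : ∀ j, IsSymmetricIn (off m rs j) (off m rs j + rs j) f) : Efull m rs f = f :=
  isFixedPt_foldr_comp <| by
    simp only [List.mem_ofFn, forall_exists_index, forall_apply_eq_imp_iff]
    exact fun j => Ej_of_isSymmetricIn (hf j)

lemma isSymmetricIn_Efull (f : MvPolynomial ℕ ℤ) (j : Fin m) :
    IsSymmetricIn (off m rs j) (off m rs j + rs j) (Efull m rs f) := by
  intro i hi hi'
  have habsorb : rename (Equiv.swap i (i + 1)) ∘ Ej (off m rs j) (rs j) = Ej (off m rs j) (rs j) :=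
    _root_.funext fun g => isSymmetricIn_Ej _ _ g i hi hi'
  refine congrFun (comp_foldr_comp_eq _ ?_ ⟨_, List.mem_ofFn.2 ⟨j, rfl⟩, habsorb⟩) f
  simp only [List.mem_ofFn, forall_exists_index, forall_apply_eq_imp_iff]
  intro j'
  by_cases hj : j' = j
  · exact .inr (hj ▸ habsorb)
  refine .inl (commute_rename_Ej fun k hk hk' => Equiv.swap_apply_of_ne_of_ne ?_ ?_)
  · rintro rfl; exact hj (eq_of_mem_block rs hk hk' hi (by omega))
  · rintro rfl; exact hj (eq_of_mem_block rs hk hk' (by omega) hi')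

end Efull

def renameStabilizer {σ R : Type*} [CommSemiring R] (f : MvPolynomial σ R) :
    Subgroup (Equiv.Perm σ) where
  carrier := {g | rename g f = f}
  one_mem' := rename_id_apply f
  mul_mem' {g h} (hg : rename g f = f) (hh : rename h f = f) := by
    change rename ⇑(g * h) f = f
    rw [Equiv.Perm.coe_mul, ← rename_rename, hh, hg]
  inv_mem' {g} (hg : rename g f = f) := by
    change rename ⇑g⁻¹ f = f
    conv_lhs => rw [← hg]
    rw [rename_rename, ← Equiv.Perm.coe_mul, inv_mul_cancel, Equiv.Perm.coe_one, rename_id_apply]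

lemma swap_mem_of_forall_swap_succ_mem (H : Subgroup (Equiv.Perm ℕ)) {lo hi : ℕ}
    (hH : ∀ i, lo ≤ i → i + 1 < hi → Equiv.swap i (i + 1) ∈ H) {a b : ℕ}
    (ha : lo ≤ a) (hab : a ≤ b) (hb : b < hi) : Equiv.swap a b ∈ H := by
  induction b, hab using Nat.le_induction with
  | base => rw [Equiv.swap_self]; exact H.one_mem
  | succ b hab ih =>
    rcases hab.eq_or_lt with rfl | hab
    · exact hH a ha hb
    rw [Equiv.swap_comm, ← Equiv.swap_mul_swap_mul_swap hab.ne (by omega : a ≠ b + 1)]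
    have hb' := hH b (by omega) hb
    exact H.mul_mem (H.mul_mem hb' (ih (by omega))) hb'

def PreservesBlocks (m : ℕ) (rs : Fin m → ℕ) (g : Equiv.Perm ℕ) : Prop :=
  ∀ j i, off m rs j ≤ i → i < off m rs j + rs j → off m rs j ≤ g i ∧ g i < off m rs j + rs j

section Young

variable {m : ℕ} (rs : Fin m → ℕ)

lemma PreservesBlocks.mul {g h : Equiv.Perm ℕ} (hg : PreservesBlocks m rs g)
    (hh : PreservesBlocks m rs h) : PreservesBlocks m rs (g * h) := fun j i hi hi' =>
  hg j _ (hh j i hi hi').1 (hh j i hi hi').2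

lemma preservesBlocks_swap {a b : ℕ} (j : Fin m) (ha : off m rs j ≤ a)
    (ha' : a < off m rs j + rs j) (hb : off m rs j ≤ b) (hb' : b < off m rs j + rs j) :
    PreservesBlocks m rs (Equiv.swap a b) := by
  intro j' i hi hi'
  rcases eq_or_ne i a with rfl | hia
  · obtain rfl := eq_of_mem_block rs ha ha' hi hi'
    rw [Equiv.swap_apply_left]; exact ⟨hb, hb'⟩
  rcases eq_or_ne i b with rfl | hib
  · obtain rfl := eq_of_mem_block rs hb hb' hi hi'
    rw [Equiv.swap_apply_right]; exact ⟨ha, ha'⟩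
  rw [Equiv.swap_apply_of_ne_of_ne hia hib]; exact ⟨hi, hi'⟩

lemma mem_of_preservesBlocks (H : Subgroup (Equiv.Perm ℕ))
    (hH : ∀ j i, off m rs j ≤ i → i + 1 < off m rs j + rs j → Equiv.swap i (i + 1) ∈ H)
    {g : Equiv.Perm ℕ} (hfix : ∀ i, ∑ k, rs k ≤ i → g i = i) (hg : PreservesBlocks m rs g) :
    g ∈ H := by
  replace hfix : ∃ n ≤ ∑ k, rs k, ∀ i, n ≤ i → g i = i := ⟨_, le_rfl, hfix⟩
  obtain ⟨n, hn, hfix⟩ := hfix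
  -- `swap (g n) n` stays in the block of `n`, and `swap (g n) n * g` fixes `n` as well.
  induction n generalizing g with
  | zero =>
    rw [show g = 1 from Equiv.ext fun i => hfix i (Nat.zero_le i)]
    exact H.one_mem
  | succ n ih =>
    obtain ⟨j, hj, hj'⟩ := exists_block rs (by omega : n < ∑ k, rs k)
    have hgn : g n ≤ n := by
      by_contra! h
      exact h.ne' (g.injective (hfix _ h))
    obtain ⟨hgj, hgj'⟩ := hg j n hj hj'
    have hswap : Equiv.swap (g n) n ∈ H :=
      swap_mem_of_forall_swap_succ_mem H (hH j) hgj hgn hj'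
    have hfix' : ∀ i, n ≤ i → (Equiv.swap (g n) n * g) i = i := by
      intro i hi
      rcases hi.eq_or_lt with rfl | hi
      · exact Equiv.swap_apply_left _ _
      rw [Equiv.Perm.mul_apply, hfix i hi]
      exact Equiv.swap_apply_of_ne_of_ne (by omega) (by omega)
    have hg' := ih ((preservesBlocks_swap rs j hgj hgj' hj hj').mul rs hg) (by omega) hfix'
    rw [← one_mul g, ← Equiv.swap_mul_self (g n) n, mul_assoc]
    exact H.mul_mem hswap hg'

end Young

/-- For a composition `(r_1,…,r_m)` of `r`, the nil-Hecke element `E = E_1⋯E_m` is an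
idempotent operator on `ℤ[x_1,x_2,…]` whose image is the ring of invariants under the Young
subgroup `S_{r_1} × ⋯ × S_{r_m}` (acting on the first `r` variables). -/
theorem Efull_idempotent_range_eq_invariants (r m : ℕ) (rs : Fin m → ℕ)
    (hsum : ∑ j, rs j = r) :
    Efull m rs ∘ Efull m rs = Efull m rs ∧
    Set.range (Efull m rs)
      = {f : MvPolynomial ℕ ℤ |
          ∀ g : Equiv.Perm ℕ, (∀ i, r ≤ i → g i = i) →
            (∀ j : Fin m, ∀ i : ℕ, off m rs j ≤ i → i < off m rs j + rs j →
              off m rs j ≤ g i ∧ g i < off m rs j + rs j) →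
            rename g f = f} := by
  subst hsum
  refine ⟨funext fun f => Efull_of_isSymmetricIn (isSymmetricIn_Efull f),
    Set.Subset.antisymm ?_ ?_⟩
  · rintro _ ⟨f, rfl⟩ g hfix hg
    exact mem_of_preservesBlocks rs (renameStabilizer _) (isSymmetricIn_Efull f) hfix hg
  · intro f hf
    refine ⟨f, Efull_of_isSymmetricIn fun j i hi hi' => hf _ (fun k hk => ?_) ?_⟩
    · have := off_add_le_sum rs j
      exact Equiv.swap_apply_of_ne_of_ne (by omega) (by omega)
    · exact preservesBlocks_swap rs j hi (by omega) (by omega) hi'
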